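/- Let H be a Hilbert space, U a linear isometry of H with fixed-point projection P, and x ∈ H. Suppose that for some N₀, ⟨x, U^k x⟩ = ⟨x, U^{N₀} x⟩ for all k ≥ N₀. Then ⟨x, U^{N₀} x⟩ = ‖P x‖². Consequently ⟨x, U^{N₀}x⟩ = 0 if and only if P x = 0. -/

import Mathlib

/-!
By von Neumann's mean ergodic theorem the Birkhoff averages `(1/n) ∑_{k<n} U^k x` converge to
`P x`, so `⟪x, (1/n) ∑_{k<n} U^k x⟫ → ⟪x, P x⟫ = ‖P x‖²`. The same quantities are the Cesàro
means of the correlations `⟪x, U^k x⟫`, which are eventually equal to `⟪x, U^{N₀} x⟫`.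
-/

open Filter Finset Function
open scoped Topology

section

variable {𝕜 E : Type*} [RCLike 𝕜] [NormedAddCommGroup E] [InnerProductSpace 𝕜 E]

theorem inner_eq_norm_sq_of_sub_mem_orthogonal {K : Submodule 𝕜 E} {x p : E} (hp : p ∈ K)
    (hxp : x - p ∈ Kᗮ) : inner 𝕜 x p = ((‖p‖ ^ 2 : ℝ) : 𝕜) :=
  calc inner 𝕜 x p = inner 𝕜 (x - p) p + inner 𝕜 p p := by rw [← inner_add_left, sub_add_cancel]
    _ = ((‖p‖ ^ 2 : ℝ) : 𝕜) := by
      rw [K.inner_left_of_mem_orthogonal hp hxp, zero_add, inner_self_eq_norm_sq_to_K]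
      norm_cast

theorem inner_birkhoffAverage_eq_cesaro (f : E → E) (x : E) (n : ℕ) :
    inner 𝕜 x (birkhoffAverage 𝕜 f _root_.id n x) =
      (n⁻¹ : ℝ) • ∑ k ∈ range n, inner 𝕜 x (f^[k] x) := by
  simp [birkhoffAverage, birkhoffSum, inner_smul_right, inner_sum, RCLike.real_smul_eq_coe_mul]

namespace ContinuousLinearMap

variable [CompleteSpace E] (f : E →L[𝕜] E) (hf : ‖f‖ ≤ 1) {K : Submodule 𝕜 E}
  (hK : ∀ y, y ∈ K ↔ f y = y) {x p : E} (hp : p ∈ K) (hxp : x - p ∈ Kᗮ)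
include hf hK hp hxp

theorem tendsto_birkhoffAverage_of_mem_orthogonal :
    Tendsto (birkhoffAverage 𝕜 f _root_.id · x) atTop (𝓝 p) := by
  have hK_eq : K = f.eqLocus (1 : E →L[𝕜] E) := by
    ext y
    simpa [LinearMap.mem_eqLocus] using hK y
  have hproj := f.tendsto_birkhoffAverage_orthogonalProjection hf x
  rwa [← Submodule.starProjection_apply,
    Submodule.eq_starProjection_of_mem_orthogonal (hK_eq ▸ hp) (hK_eq ▸ hxp)] at hproj

theorem eq_norm_sq_of_tendsto_inner_iterate {c : 𝕜}
    (hc : Tendsto (fun k ↦ inner 𝕜 x (f^[k] x)) atTop (𝓝 c)) : c = ((‖p‖ ^ 2 : ℝ) : 𝕜) := by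
  have hcesaro : Tendsto (fun n ↦ inner 𝕜 x (birkhoffAverage 𝕜 f _root_.id n x)) atTop (𝓝 c) := by
    simpa only [inner_birkhoffAverage_eq_cesaro] using hc.cesaro_smul
  have hergodic : Tendsto (fun n ↦ inner 𝕜 x (birkhoffAverage 𝕜 f _root_.id n x)) atTop
      (𝓝 (inner 𝕜 x p)) :=
    tendsto_const_nhds.inner (f.tendsto_birkhoffAverage_of_mem_orthogonal hf hK hp hxp)
  rw [tendsto_nhds_unique hcesaro hergodic, inner_eq_norm_sq_of_sub_mem_orthogonal hp hxp]

end ContinuousLinearMap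

end

/-- If the correlations `⟨x, U^k x⟩` are eventually constant, equal to `⟨x, U^{N₀} x⟩` for
`k ≥ N₀`, then this eventual value equals `‖P x‖²` where `P` is the fixed-point projection
of the isometry `U`; consequently it vanishes iff `P x = 0`. -/
theorem stmt10 {H : Type*} [NormedAddCommGroup H] [InnerProductSpace ℂ H] [CompleteSpace H]
    (U : H →ₗᵢ[ℂ] H)
    (K : Submodule ℂ H) (hK : ∀ y, y ∈ K ↔ U y = y)
    (P : H →L[ℂ] H) (hPmem : ∀ y, P y ∈ K) (hPorth : ∀ y, y - P y ∈ Kᗮ)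
    (x : H) (N₀ : ℕ)
    (hconst : ∀ k ≥ N₀, (inner ℂ x ((⇑U)^[k] x) : ℂ) = (inner ℂ x ((⇑U)^[N₀] x) : ℂ)) :
    (inner ℂ x ((⇑U)^[N₀] x) : ℂ) = ((‖P x‖ ^ 2 : ℝ) : ℂ)
      ∧ ((inner ℂ x ((⇑U)^[N₀] x) : ℂ) = 0 ↔ P x = 0) := by
  have hlim : (inner ℂ x ((⇑U)^[N₀] x) : ℂ) = ((‖P x‖ ^ 2 : ℝ) : ℂ) :=
    U.toContinuousLinearMap.eq_norm_sq_of_tendsto_inner_iterate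
      U.norm_toContinuousLinearMap_le hK (hPmem x) (hPorth x)
      (tendsto_atTop_of_eventually_const hconst)
  refine ⟨hlim, ?_⟩
  rw [hlim, Complex.ofReal_eq_zero, sq_eq_zero_iff, norm_eq_zero]
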